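/- Let T : ℝ₊^N → ℝ₊₊^N be a positive concave mapping with a fixed point x* (T(x*) = x*), whose lower bounding matrix M satisfies ρ(M) < 1, and let T_A(x) := (I − M)⁻¹·(T(x) − M·x) be its accelerated mapping. Let u ∈ ℝ₊^N with T(u) ≥ u or T(u) ≤ u componentwise, and define x′_{n+1} := T(x′_n) and x″_{n+1} := T_A(x″_n) with x′_1 = x″_1 = u. Then the accelerated sequence converges faster in the sense that ‖x″_n − x*‖_∞ ≤ ‖x′_n − x*‖_∞ for every n, where ‖·‖_∞ denotes the maximum-absolute-value norm on ℝ^N. -/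

import Mathlib

open Matrix Filter Topology

noncomputable section

/-- `g` is a supergradient of `f` at `x`: the supergradient inequality holds for all
points `y` in the nonnegative orthant. -/
def IsSupergrad {N : ℕ} (f : (Fin N → ℝ) → ℝ) (x g : Fin N → ℝ) : Prop :=
  ∀ y : Fin N → ℝ, 0 ≤ y → f y ≤ f x + ∑ i, g i * (y i - x i)

/-- `M` is the lower bounding matrix of the positive concave mapping with components `f i`:
`M i k` is the infimum of the `k`-th components of all supergradients of `f i` at points of
the nonnegative orthant. -/
def IsLBM {N : ℕ} (f : Fin N → (Fin N → ℝ) → ℝ) (M : Matrix (Fin N) (Fin N) ℝ) : Prop :=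
  ∀ i k, M i k =
    sInf {t : ℝ | ∃ x : Fin N → ℝ, 0 ≤ x ∧ ∃ g : Fin N → ℝ, IsSupergrad (f i) x g ∧ g k = t}

/-- The spectral radius of a real matrix: the supremum of the moduli of its complex
eigenvalues. -/
def specRad {N : ℕ} (M : Matrix (Fin N) (Fin N) ℝ) : ENNReal :=
  spectralRadius ℂ (M.map (algebraMap ℝ ℂ))

/-!
Write `G x = T x - M *ᵥ x`. Every row of `M` lies below all supergradients of the corresponding
`f i`, so the supergradient inequality at the interior points `b + t` (`t > 0`) followed by upper
semicontinuity as `t → 0` makes `G` monotone on the orthant. As `ρ(M) < 1`, `(1 - M)⁻¹ = ∑ Mᵏ`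
has nonnegative entries, hence `T_A = (1 - M)⁻¹ ∘ G` is monotone, fixes `x*`, and `x ≤ T x`
implies `T x ≤ T_A x ≤ T (T_A x)` (dually for `T x ≤ x`). Concavity and positivity make `T`
strictly subhomogeneous, which places `u` below `x*` if `u ≤ T u` and above it if `T u ≤ u`;
induction then gives `Tⁿ u ≤ T_Aⁿ u ≤ x*`, respectively `x* ≤ T_Aⁿ u ≤ Tⁿ u`.
-/

theorem ConcaveOn.exists_le_add_of_mem_interior {E : Type*} [NormedAddCommGroup E]
    [NormedSpace ℝ E] [FiniteDimensional ℝ E] {s : Set E} {f : E → ℝ} (hf : ConcaveOn ℝ s f)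
    {x : E} (hx : x ∈ interior s) : ∃ φ : E →L[ℝ] ℝ, ∀ y ∈ s, f y ≤ f x + φ (y - x) := by
  set A : Set (E × ℝ) := {p | p.1 ∈ interior s ∧ p.2 < f p.1}
  have hA_convex : Convex ℝ A :=
    (hf.subset interior_subset hf.1.interior).convex_strict_hypograph
  have hA_open : IsOpen A := by
    have hcont : ContinuousOn (fun p : E × ℝ => f p.1 - p.2) (interior s ×ˢ Set.univ) :=
      (hf.continuousOn_interior.comp continuousOn_fst fun p hp => hp.1).sub continuousOn_snd
    have hA : A = interior s ×ˢ Set.univ ∩ (fun p : E × ℝ => f p.1 - p.2) ⁻¹' Set.Ioi 0 := by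
      ext p; simp [A, sub_pos]
    exact hA ▸ hcont.isOpen_inter_preimage (isOpen_interior.prod isOpen_univ) isOpen_Ioi
  obtain ⟨L, hL⟩ :=
    geometric_hahn_banach_open_point hA_convex hA_open fun h : (x, f x) ∈ A => lt_irrefl _ h.2
  set c := L (0, 1)
  have hsplit : ∀ y t, L (y, t) = L (y, 0) + t * c := fun y t => by
    rw [← smul_eq_mul, ← L.map_smul, ← map_add]; simp
  have hc : 0 < c := by
    have := hL (x, f x - 1) ⟨hx, by linarith⟩
    rw [hsplit x, hsplit x (f x)] at this
    nlinarith
  set φ : E →L[ℝ] ℝ := -c⁻¹ • L.comp (ContinuousLinearMap.inl ℝ E ℝ)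
  have hφ : ∀ y, φ (y - x) = -(c⁻¹ * (L (y, 0) - L (x, 0))) := fun y => by
    simp [φ, ← map_sub]
  have h_interior : ∀ y ∈ interior s, f y ≤ f x + φ (y - x) := by
    intro y hy
    refine le_of_forall_lt fun t ht => ?_
    have := hL (y, t) ⟨hy, ht⟩
    rw [hsplit y, hsplit x] at this
    have : c⁻¹ * (L (y, 0) - L (x, 0)) < f x - t := by
      rw [inv_mul_lt_iff₀ hc]
      linarith
    linarith [hφ y]
  refine ⟨φ, fun y hy => ?_⟩
  -- The supergradient inequality at the midpoint of `x` and `y`, which is interior, doubles to `y`.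
  have hmid := hf.1.combo_interior_self_mem_interior hx hy (a := 1 / 2) (b := 1 / 2)
    (by norm_num) (by norm_num) (by norm_num)
  have h1 := h_interior _ hmid
  have h2 := hf.2 (interior_subset hx) hy (by norm_num : (0 : ℝ) ≤ 1 / 2)
    (by norm_num : (0 : ℝ) ≤ 1 / 2) (by norm_num)
  have h3 : φ ((1 / 2 : ℝ) • x + (1 / 2 : ℝ) • y - x) = 1 / 2 * φ (y - x) := by
    rw [← smul_eq_mul, ← map_smul]
    congr 1
    module
  simp only [smul_eq_mul] at h2
  linarith

theorem ConcaveOn.exists_isSupergrad {N : ℕ} {f : (Fin N → ℝ) → ℝ} (hf : ConcaveOn ℝ {x | 0 ≤ x} f)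
    {x : Fin N → ℝ} (hx : ∀ i, 0 < x i) : ∃ g, IsSupergrad f x g := by
  have hx' : x ∈ interior {x : Fin N → ℝ | 0 ≤ x} := by
    rw [show {x : Fin N → ℝ | 0 ≤ x} = Set.Ici 0 from rfl, ← Set.pi_univ_Ici,
      interior_pi_set Set.finite_univ]
    simpa using hx
  obtain ⟨φ, hφ⟩ := hf.exists_le_add_of_mem_interior hx'
  refine ⟨fun i => φ (Pi.single i 1), fun y hy => (hφ y hy).trans_eq ?_⟩
  conv_lhs => rw [← Finset.univ_sum_single (M := fun _ => ℝ) (y - x)]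
  rw [map_sum]
  congr 1
  refine Finset.sum_congr rfl fun i _ => ?_
  show φ (Pi.single i (y i - x i)) = φ (Pi.single i 1) * (y i - x i)
  rw [mul_comm, ← smul_eq_mul, ← map_smul, ← Pi.single_smul', smul_eq_mul, mul_one]

theorem IsSupergrad.nonneg {N : ℕ} {f : (Fin N → ℝ) → ℝ} (hpos : ∀ y, 0 ≤ y → 0 < f y)
    {x g : Fin N → ℝ} (hx : 0 ≤ x) (hg : IsSupergrad f x g) (k : Fin N) : 0 ≤ g k := by
  by_contra! hneg
  -- At `x + t • e k` the supergradient bound `f x + g k * t` equals `-1`.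
  set t := (f x + 1) / -g k
  have hy : 0 ≤ x + Pi.single k t :=
    add_nonneg hx (Pi.single_nonneg.2 (div_nonneg (by linarith [hpos x hx]) (by linarith)))
  have h := hg _ hy
  have hgt : g k * t = -(f x + 1) := by
    show g k * ((f x + 1) / -g k) = _
    field_simp [hneg.ne]
  simp [Pi.single_apply, hgt] at h
  linarith [hpos _ hy]

namespace IsLBM

variable {N : ℕ} {f : Fin N → (Fin N → ℝ) → ℝ} {M : Matrix (Fin N) (Fin N) ℝ}

theorem nonneg (hM : IsLBM f M) (hpos : ∀ i, ∀ x : Fin N → ℝ, 0 ≤ x → 0 < f i x) (i k : Fin N) :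
    0 ≤ M i k := by
  rw [hM i k]
  exact Real.sInf_nonneg fun t ⟨x, hx, g, hg, hgt⟩ => hgt ▸ hg.nonneg (hpos i) hx k

theorem le_of_isSupergrad (hM : IsLBM f M) (hpos : ∀ i, ∀ x : Fin N → ℝ, 0 ≤ x → 0 < f i x)
    {i : Fin N} {x g : Fin N → ℝ} (hx : 0 ≤ x) (hg : IsSupergrad (f i) x g) (k : Fin N) :
    M i k ≤ g k := by
  rw [hM i k]
  exact csInf_le ⟨0, fun t ⟨x, hx, g, hg, hgt⟩ => hgt ▸ hg.nonneg (hpos i) hx k⟩ ⟨x, hx, g, hg, rfl⟩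

theorem sub_mulVec_le_sub_mulVec_add_const (hM : IsLBM f M)
    (hconc : ∀ i, ConcaveOn ℝ {x : Fin N → ℝ | 0 ≤ x} (f i))
    (hpos : ∀ i, ∀ x : Fin N → ℝ, 0 ≤ x → 0 < f i x) {a b : Fin N → ℝ} (ha : 0 ≤ a)
    (hab : a ≤ b) {t : ℝ} (ht : 0 < t) (i : Fin N) :
    f i a - (M *ᵥ a) i ≤ f i (b + fun _ => t) - (M *ᵥ b) i := by
  have hbt : ∀ k, 0 < (b + fun _ => t : Fin N → ℝ) k := fun k => by
    simpa using add_pos_of_nonneg_of_pos ((ha k).trans (hab k)) ht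
  obtain ⟨g, hg⟩ := (hconc i).exists_isSupergrad hbt
  have hsum : ∑ k, g k * (a k - (b + fun _ => t : Fin N → ℝ) k) ≤ (M *ᵥ a) i - (M *ᵥ b) i := by
    simp only [mulVec, dotProduct, ← Finset.sum_sub_distrib, ← mul_sub]
    refine Finset.sum_le_sum fun k _ => ?_
    have hMg := hM.le_of_isSupergrad hpos (fun k => (hbt k).le) hg k
    have hM0 := hM.nonneg hpos i k
    have habk := hab k
    simp only [Pi.add_apply]
    nlinarith
  linarith [hg a ha]

theorem monotoneOn_sub_mulVec (hM : IsLBM f M)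
    (hconc : ∀ i, ConcaveOn ℝ {x : Fin N → ℝ | 0 ≤ x} (f i))
    (husc : ∀ i, UpperSemicontinuousOn (f i) {x : Fin N → ℝ | 0 ≤ x})
    (hpos : ∀ i, ∀ x : Fin N → ℝ, 0 ≤ x → 0 < f i x) :
    MonotoneOn (fun x i => f i x - (M *ᵥ x) i) {x | 0 ≤ x} := by
  intro a ha b hb hab i
  by_contra! hlt
  have hshift : Tendsto (fun t : ℝ => b + fun _ => t) (𝓝[>] 0) (𝓝[{x | 0 ≤ x}] b) := by
    refine tendsto_nhdsWithin_iff.2 ⟨?_, ?_⟩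
    · have : Continuous fun t : ℝ => b + fun _ => t :=
        continuous_const.add (continuous_pi fun _ => continuous_id)
      simpa [← Pi.zero_def] using (this.tendsto 0).mono_left (nhdsWithin_le_nhds (s := Set.Ioi 0))
    · filter_upwards [self_mem_nhdsWithin] with t (ht : 0 < t)
      exact add_nonneg hb fun _ => ht.le
  have hfb : f i b < f i a - (M *ᵥ a) i + (M *ᵥ b) i := by linarith
  obtain ⟨t, hft, ht⟩ :=
    ((hshift.eventually (husc i b hb _ hfb)).and self_mem_nhdsWithin).exists
  linarith [hM.sub_mulVec_le_sub_mulVec_add_const hconc hpos ha hab ht i]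

end IsLBM

theorem tendsto_pow_atTop_nhds_zero_of_spectralRadius_lt_one {A : Type*} [NormedRing A]
    [NormedAlgebra ℂ A] [CompleteSpace A] {a : A} (h : spectralRadius ℂ a < 1) :
    Tendsto (a ^ ·) atTop (𝓝 0) := by
  obtain ⟨r, hr0, hρr, hr1⟩ := ENNReal.lt_iff_exists_real_btwn.1 h
  have hbound : ∀ᶠ n : ℕ in atTop, ‖a ^ n‖ ≤ r ^ n := by
    filter_upwards [(spectrum.pow_norm_pow_one_div_tendsto_nhds_spectralRadius
      a).eventually_lt_const hρr, eventually_ne_atTop 0] with n hn hn0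
    rw [ENNReal.ofReal_lt_ofReal_iff'] at hn
    rw [← Real.rpow_inv_natCast_pow (norm_nonneg (a ^ n)) hn0, ← one_div]
    exact pow_le_pow_left₀ (by positivity) hn.1.le n
  exact squeeze_zero_norm' hbound
    (tendsto_pow_atTop_nhds_zero_of_lt_one hr0 (ENNReal.ofReal_lt_one.1 hr1))

namespace Matrix

section

attribute [local instance] Matrix.linftyOpNormedRing Matrix.linftyOpNormedAlgebra

theorem tendsto_pow_of_specRad_lt_one {N : ℕ} {M : Matrix (Fin N) (Fin N) ℝ}
    (h : specRad M < 1) : Tendsto (M ^ ·) atTop (𝓝 0) := by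
  have : CompleteSpace (Matrix (Fin N) (Fin N) ℂ) := FiniteDimensional.complete ℂ _
  have hre : Continuous fun B : Matrix (Fin N) (Fin N) ℂ => B.map Complex.re :=
    continuous_id.matrix_map Complex.continuous_re
  have hA : Tendsto (M.map (algebraMap ℝ ℂ) ^ ·) atTop (𝓝 0) :=
    tendsto_pow_atTop_nhds_zero_of_spectralRadius_lt_one h
  have hpow : (M ^ ·) = (fun B => B.map Complex.re) ∘ (M.map (algebraMap ℝ ℂ) ^ ·) := by
    funext n
    rw [Function.comp_apply, ← Matrix.map_pow M (algebraMap ℝ ℂ), map_map]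
    ext i j
    simp
  rw [hpow]
  simpa using (hre.tendsto 0).comp hA

end

theorem isUnit_one_sub_of_tendsto_pow {K : Type*} [Field K] [TopologicalSpace K]
    [IsTopologicalRing K] [T2Space K] {ι : Type*} [Fintype ι] [DecidableEq ι] {M : Matrix ι ι K}
    (h : Tendsto (M ^ ·) atTop (𝓝 0)) : IsUnit (1 - M) := by
  rw [isUnit_iff_isUnit_det, isUnit_iff_ne_zero]
  intro hdet
  obtain ⟨v, hv, hMv⟩ := exists_mulVec_eq_zero_iff.2 hdet
  have hMv' : M *ᵥ v = v := by simpa [sub_mulVec, sub_eq_zero, eq_comm] using hMv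
  have hpow : ∀ n, (M ^ n) *ᵥ v = v := by
    intro n
    induction n with
    | zero => simp
    | succ n ih => rw [pow_succ, ← mulVec_mulVec, hMv', ih]
  have := ((continuous_id.matrix_mulVec (continuous_const (y := v))).tendsto 0).comp h
  simp only [Function.comp_def, id, hpow, zero_mulVec] at this
  exact hv (tendsto_const_nhds_iff.1 this)

theorem monotone_mulVec {R : Type*} [Semiring R] [PartialOrder R] [IsOrderedRing R]
    {m n : Type*} [Fintype n] {A : Matrix m n R} (hA : ∀ i j, 0 ≤ A i j) :
    Monotone (A *ᵥ ·) :=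
  fun _ _ h i => Finset.sum_le_sum fun j _ => mul_le_mul_of_nonneg_left (h j) (hA i j)

theorem inv_one_sub_nonneg {ι : Type*} [Fintype ι] [DecidableEq ι] {M : Matrix ι ι ℝ}
    (hM : ∀ i j, 0 ≤ M i j) (h : Tendsto (M ^ ·) atTop (𝓝 0)) (i j : ι) :
    0 ≤ (1 - M)⁻¹ i j := by
  have hdet := (isUnit_iff_isUnit_det _).1 (isUnit_one_sub_of_tendsto_pow h)
  have hsum : ∀ n, ∑ k ∈ Finset.range n, M ^ k = (1 - M)⁻¹ * (1 - M ^ n) := fun n => by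
    rw [← mul_neg_geom_sum, ← mul_assoc, nonsing_inv_mul _ hdet, one_mul]
  have hlim : Tendsto (fun n => ∑ k ∈ Finset.range n, M ^ k) atTop (𝓝 (1 - M)⁻¹) := by
    simp_rw [hsum]
    simpa using (tendsto_const_nhds (x := (1 - M)⁻¹)).mul
      ((tendsto_const_nhds (x := (1 : Matrix ι ι ℝ))).sub h)
  have hpow : ∀ n i j, 0 ≤ (M ^ n) i j := by
    intro n
    induction n with
    | zero => intro i j; by_cases hij : i = j <;> simp [hij]
    | succ n ih =>
      intro i j
      rw [pow_succ, mul_apply]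
      exact Finset.sum_nonneg fun l _ => mul_nonneg (ih i l) (hM l j)
  refine ge_of_tendsto (((continuous_apply j).comp (continuous_apply i)).tendsto _ |>.comp hlim)
    (Eventually.of_forall fun n => ?_)
  show 0 ≤ (∑ k ∈ Finset.range n, M ^ k) i j
  rw [sum_apply]
  exact Finset.sum_nonneg fun k _ => hpow k i j

end Matrix

theorem ConcaveOn.apply_smul_lt_mul {E : Type*} [AddCommGroup E] [Module ℝ E] {s : Set E}
    {f : E → ℝ} (hf : ConcaveOn ℝ s f) (h0 : 0 ∈ s) (hf0 : 0 < f 0) {x : E} {c : ℝ}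
    (hc : 1 < c) (hcx : c • x ∈ s) : f (c • x) < c * f x := by
  have hc0 : 0 < c := by linarith
  have h := hf.2 hcx h0 (inv_nonneg.2 hc0.le) (sub_nonneg.2 (inv_le_one_of_one_le₀ hc.le))
    (by ring)
  rw [smul_smul, inv_mul_cancel₀ hc0.ne', one_smul, smul_zero, add_zero, smul_eq_mul,
    smul_eq_mul] at h
  have : 0 < (1 - c⁻¹) * f 0 := mul_pos (sub_pos.2 (inv_lt_one_of_one_lt₀ hc)) hf0
  rw [← inv_mul_lt_iff₀ hc0]
  linarith

theorem norm_sub_le_norm_sub_of_mem_uIcc {ι : Type*} [Fintype ι] {a b c : ι → ℝ}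
    (h : c ∈ Set.uIcc a b) : ‖c - a‖ ≤ ‖b - a‖ :=
  (pi_norm_le_iff_of_nonneg (norm_nonneg _)).2 fun i =>
    (Set.abs_sub_left_of_mem_uIcc ⟨h.1 i, h.2 i⟩).trans (norm_le_pi_norm (b - a) i)

section Order

variable {ι : Type*} [Fintype ι] {T : (ι → ℝ) → ι → ℝ}

theorem le_of_le_map_of_map_le (hT : MonotoneOn T {x | 0 ≤ x})
    (hsub : ∀ z : ι → ℝ, 0 ≤ z → ∀ c : ℝ, 1 < c → ∀ k, T (c • z) k < c * T z k)
    {x y : ι → ℝ} (hx : 0 ≤ x) (hy : ∀ i, 0 < y i) (hxT : x ≤ T x) (hTy : T y ≤ y) : x ≤ y := by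
  by_contra hxy
  obtain ⟨k₀, hk₀⟩ : ∃ k, y k < x k := by simpa [Pi.le_def] using hxy
  -- Take the least `c` with `x ≤ c • y`; it exceeds `1`, and where it is attained strict
  -- subhomogeneity of `T` contradicts `x ≤ T x`.
  obtain ⟨k, -, hk⟩ := Finset.exists_max_image Finset.univ (fun k => x k / y k)
    ⟨k₀, Finset.mem_univ _⟩
  set c := x k / y k
  have hc : 1 < c := ((one_lt_div (hy k₀)).2 hk₀).trans_le (hk k₀ (Finset.mem_univ _))
  have hxc : x ≤ c • y := fun i => by
    simpa [← div_le_iff₀ (hy i)] using hk i (Finset.mem_univ _)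
  have hxk : x k = c * y k := (div_mul_cancel₀ _ (hy k).ne').symm
  have hc0 : 0 ≤ c := by linarith
  have hcy : 0 ≤ c • y := smul_nonneg hc0 fun i => (hy i).le
  have hTc := hT hx hcy hxc k
  have hcT := mul_le_mul_of_nonneg_left (hTy k) hc0
  linarith [hsub y (fun i => (hy i).le) c hc k, hxT k]

theorem monotoneOn_of_monotoneOn_sub_mulVec {M : Matrix ι ι ℝ}
    (hG : MonotoneOn (fun x => T x - M *ᵥ x) {x | 0 ≤ x})
    (hM : ∀ i j, 0 ≤ M i j) :
    MonotoneOn T {x | 0 ≤ x} := fun a ha b hb hab => by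
  simpa using add_le_add (hG ha hb hab) (monotone_mulVec hM hab)

end Order

theorem Function.eq_iterate_of_apply_succ {α : Type*} {F : α → α} {x : ℕ → α}
    (hx : ∀ n, x (n + 1) = F (x n)) (n : ℕ) : x n = F^[n] (x 0) := by
  induction n with
  | zero => rfl
  | succ n ih => rw [hx, ih, Function.iterate_succ_apply']

def accelMap {ι : Type*} [Fintype ι] [DecidableEq ι] (T : (ι → ℝ) → ι → ℝ)
    (M : Matrix ι ι ℝ) (x : ι → ℝ) : ι → ℝ :=
  (1 - M)⁻¹ *ᵥ (T x - M *ᵥ x)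

section AccelMap

variable {ι : Type*} [Fintype ι] [DecidableEq ι] {T : (ι → ℝ) → ι → ℝ} {M : Matrix ι ι ℝ}

theorem inv_one_sub_mulVec_sub_mulVec (hU : IsUnit (1 - M)) (v : ι → ℝ) :
    (1 - M)⁻¹ *ᵥ (v - M *ᵥ v) = v := by
  have h : v - M *ᵥ v = (1 - M) *ᵥ v := by rw [sub_mulVec, one_mulVec]
  rw [h, mulVec_mulVec, nonsing_inv_mul _ ((isUnit_iff_isUnit_det _).1 hU), one_mulVec]

theorem accelMap_sub_mulVec (hU : IsUnit (1 - M)) (x : ι → ℝ) :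
    accelMap T M x - M *ᵥ accelMap T M x = T x - M *ᵥ x := by
  have h : ∀ w, w - M *ᵥ w = (1 - M) *ᵥ w := fun w => by rw [sub_mulVec, one_mulVec]
  rw [accelMap, h, mulVec_mulVec, mul_nonsing_inv _ ((isUnit_iff_isUnit_det _).1 hU), one_mulVec]

theorem accelMap_eq_self (hU : IsUnit (1 - M)) {x : ι → ℝ} (hx : T x = x) :
    accelMap T M x = x := by
  rw [accelMap, hx, inv_one_sub_mulVec_sub_mulVec hU]

theorem map_accelMap_sub_accelMap (hU : IsUnit (1 - M)) (x : ι → ℝ) :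
    T (accelMap T M x) - accelMap T M x =
      (T (accelMap T M x) - M *ᵥ accelMap T M x) - (T x - M *ᵥ x) := by
  rw [← accelMap_sub_mulVec (T := T) hU x]
  abel

theorem map_le_accelMap (hM : ∀ i j, 0 ≤ M i j) (hB : ∀ i j, 0 ≤ (1 - M)⁻¹ i j)
    (hU : IsUnit (1 - M)) {x : ι → ℝ} (hx : x ≤ T x) : T x ≤ accelMap T M x :=
  calc T x = (1 - M)⁻¹ *ᵥ (T x - M *ᵥ T x) := (inv_one_sub_mulVec_sub_mulVec hU _).symm
    _ ≤ accelMap T M x := monotone_mulVec hB (sub_le_sub_left (monotone_mulVec hM hx) _)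

theorem accelMap_le_map (hM : ∀ i j, 0 ≤ M i j) (hB : ∀ i j, 0 ≤ (1 - M)⁻¹ i j)
    (hU : IsUnit (1 - M)) {x : ι → ℝ} (hx : T x ≤ x) : accelMap T M x ≤ T x :=
  calc accelMap T M x ≤ (1 - M)⁻¹ *ᵥ (T x - M *ᵥ T x) :=
        monotone_mulVec hB (sub_le_sub_left (monotone_mulVec hM hx) _)
    _ = T x := inv_one_sub_mulVec_sub_mulVec hU _

theorem monotoneOn_accelMap (hG : MonotoneOn (fun x => T x - M *ᵥ x) {x | 0 ≤ x})
    (hB : ∀ i j, 0 ≤ (1 - M)⁻¹ i j) :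
    MonotoneOn (accelMap T M) {x | 0 ≤ x} :=
  fun _ ha _ hb hab => monotone_mulVec hB (hG ha hb hab)

theorem accelMap_le_map_accelMap (hG : MonotoneOn (fun x => T x - M *ᵥ x) {x | 0 ≤ x})
    (hM : ∀ i j, 0 ≤ M i j) (hB : ∀ i j, 0 ≤ (1 - M)⁻¹ i j)
    (hU : IsUnit (1 - M)) {x : ι → ℝ} (hx0 : 0 ≤ x) (hx : x ≤ T x) :
    accelMap T M x ≤ T (accelMap T M x) := by
  have hxA : x ≤ accelMap T M x := hx.trans (map_le_accelMap hM hB hU hx)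
  rw [← sub_nonneg, map_accelMap_sub_accelMap hU, sub_nonneg]
  exact hG hx0 (hx0.trans hxA) hxA

theorem map_accelMap_le_accelMap (hG : MonotoneOn (fun x => T x - M *ᵥ x) {x | 0 ≤ x})
    (hM : ∀ i j, 0 ≤ M i j) (hB : ∀ i j, 0 ≤ (1 - M)⁻¹ i j)
    (hU : IsUnit (1 - M)) {x : ι → ℝ} (hx0 : 0 ≤ x) (hAx0 : 0 ≤ accelMap T M x)
    (hx : T x ≤ x) : T (accelMap T M x) ≤ accelMap T M x := by
  have hAx : accelMap T M x ≤ x := (accelMap_le_map hM hB hU hx).trans hx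
  rw [← sub_nonpos, map_accelMap_sub_accelMap hU, sub_nonpos]
  exact hG hAx0 hx0 hAx

theorem iterate_le_iterate_accelMap_of_le_map (hG : MonotoneOn (fun x => T x - M *ᵥ x) {x | 0 ≤ x})
    (hM : ∀ i j, 0 ≤ M i j)
    (hB : ∀ i j, 0 ≤ (1 - M)⁻¹ i j) (hU : IsUnit (1 - M)) {u x : ι → ℝ} (hu : 0 ≤ u)
    (huT : u ≤ T u) (hux : u ≤ x) (hx : T x = x) (n : ℕ) :
    T^[n] u ≤ (accelMap T M)^[n] u ∧ (accelMap T M)^[n] u ≤ x := by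
  have hT := monotoneOn_of_monotoneOn_sub_mulVec hG hM
  suffices h : u ≤ T^[n] u ∧ T^[n] u ≤ (accelMap T M)^[n] u ∧ (accelMap T M)^[n] u ≤ x ∧
      (accelMap T M)^[n] u ≤ T ((accelMap T M)^[n] u) from ⟨h.2.1, h.2.2.1⟩
  induction n with
  | zero => exact ⟨le_rfl, le_rfl, hux, huT⟩
  | succ n ih =>
    obtain ⟨hup, hpq, hqx, hqT⟩ := ih
    have hp0 := hu.trans hup
    have hq0 := hp0.trans hpq
    simp only [Function.iterate_succ_apply']
    exact ⟨huT.trans (hT hu hp0 hup), (hT hp0 hq0 hpq).trans (map_le_accelMap hM hB hU hqT),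
      (monotoneOn_accelMap hG hB hq0 (hu.trans hux) hqx).trans_eq (accelMap_eq_self hU hx),
      accelMap_le_map_accelMap hG hM hB hU hq0 hqT⟩

theorem iterate_accelMap_le_iterate_of_map_le (hG : MonotoneOn (fun x => T x - M *ᵥ x) {x | 0 ≤ x})
    (hM : ∀ i j, 0 ≤ M i j)
    (hB : ∀ i j, 0 ≤ (1 - M)⁻¹ i j) (hU : IsUnit (1 - M)) {u x : ι → ℝ} (hx0 : 0 ≤ x)
    (hTu : T u ≤ u) (hxu : x ≤ u) (hx : T x = x) (n : ℕ) :
    x ≤ (accelMap T M)^[n] u ∧ (accelMap T M)^[n] u ≤ T^[n] u := by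
  have hT := monotoneOn_of_monotoneOn_sub_mulVec hG hM
  suffices h : x ≤ (accelMap T M)^[n] u ∧ (accelMap T M)^[n] u ≤ T^[n] u ∧
      T ((accelMap T M)^[n] u) ≤ (accelMap T M)^[n] u from ⟨h.1, h.2.1⟩
  induction n with
  | zero => exact ⟨hxu, le_rfl, hTu⟩
  | succ n ih =>
    obtain ⟨hxq, hqp, hTq⟩ := ih
    have hq0 := hx0.trans hxq
    have hxAq : x ≤ accelMap T M ((accelMap T M)^[n] u) :=
      (accelMap_eq_self hU hx).symm.trans_le (monotoneOn_accelMap hG hB hx0 hq0 hxq)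
    simp only [Function.iterate_succ_apply']
    exact ⟨hxAq, (accelMap_le_map hM hB hU hTq).trans (hT hq0 (hq0.trans hqp) hqp),
      map_accelMap_le_accelMap hG hM hB hU hq0 (hx0.trans hxAq) hTq⟩

end AccelMap

/-- For monotone starting points, the accelerated iterates converge faster to the fixed
point than the standard iterates, in the sup-norm sense. -/
theorem accelerated_iterates_faster {N : ℕ} (f : Fin N → (Fin N → ℝ) → ℝ)
    (hconc : ∀ i, ConcaveOn ℝ {x : Fin N → ℝ | 0 ≤ x} (f i))
    (husc : ∀ i, UpperSemicontinuousOn (f i) {x : Fin N → ℝ | 0 ≤ x})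
    (hpos : ∀ i, ∀ x : Fin N → ℝ, 0 ≤ x → 0 < f i x)
    (M : Matrix (Fin N) (Fin N) ℝ) (hM : IsLBM f M)
    (hrad : specRad M < 1)
    (xstar : Fin N → ℝ) (hxstar : 0 ≤ xstar) (hfix : (fun i => f i xstar) = xstar)
    (TA : (Fin N → ℝ) → (Fin N → ℝ))
    (hTA : ∀ x : Fin N → ℝ, TA x = (1 - M)⁻¹ *ᵥ ((fun i => f i x) - M *ᵥ x))
    (u : Fin N → ℝ) (hu : 0 ≤ u)
    (hmonostart : (u ≤ fun i => f i u) ∨ ((fun i => f i u) ≤ u))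
    (xp : ℕ → Fin N → ℝ) (hp0 : xp 0 = u) (hprec : ∀ n, xp (n + 1) = fun i => f i (xp n))
    (xq : ℕ → Fin N → ℝ) (hq0 : xq 0 = u) (hqrec : ∀ n, xq (n + 1) = TA (xq n)) :
    ∀ n, ‖xq n - xstar‖ ≤ ‖xp n - xstar‖ := by
  set T : (Fin N → ℝ) → Fin N → ℝ := fun x i => f i x
  have hMnn := hM.nonneg hpos
  have hG : MonotoneOn (fun x => T x - M *ᵥ x) {x | 0 ≤ x} :=
    hM.monotoneOn_sub_mulVec hconc husc hpos
  have hpow := Matrix.tendsto_pow_of_specRad_lt_one hrad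
  have hU := Matrix.isUnit_one_sub_of_tendsto_pow hpow
  have hB := Matrix.inv_one_sub_nonneg hMnn hpow
  have hT := monotoneOn_of_monotoneOn_sub_mulVec hG hMnn
  have hsub : ∀ z : Fin N → ℝ, 0 ≤ z → ∀ c : ℝ, 1 < c → ∀ k, T (c • z) k < c * T z k :=
    fun z hz c hc k => (hconc k).apply_smul_lt_mul (le_refl (0 : Fin N → ℝ)) (hpos k 0 le_rfl) hc
      (smul_nonneg (by linarith) hz)
  have hTA' : TA = accelMap T M := funext hTA
  intro n
  rw [Function.eq_iterate_of_apply_succ (F := T) hprec,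
    Function.eq_iterate_of_apply_succ (x := xq) (hTA' ▸ hqrec), hp0, hq0]
  rcases hmonostart with hup | hdown
  · have hxstar_pos : ∀ i, 0 < xstar i := fun i => congrFun hfix i ▸ hpos i xstar hxstar
    obtain ⟨hpq, hqx⟩ := iterate_le_iterate_accelMap_of_le_map hG hMnn hB hU hu hup
      (le_of_le_map_of_map_le hT hsub hu hxstar_pos hup hfix.le) hfix n
    exact norm_sub_le_norm_sub_of_mem_uIcc (Set.Icc_subset_uIcc' ⟨hpq, hqx⟩)
  · have hu_pos : ∀ i, 0 < u i := fun i => (hpos i u hu).trans_le (hdown i)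
    obtain ⟨hxq, hqp⟩ := iterate_accelMap_le_iterate_of_map_le hG hMnn hB hU hxstar hdown
      (le_of_le_map_of_map_le hT hsub hxstar hu_pos hfix.ge hdown) hfix n
    exact norm_sub_le_norm_sub_of_mem_uIcc (Set.Icc_subset_uIcc ⟨hxq, hqp⟩)
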